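/- Let f₁ and f₂ be admissible functions. Then there exists an injective sequence (σ_i)_{i∈ℕ} of permutations of ℕ such that for all i ≠ j the following holds: whenever τ and τ' are permutations of ℕ such that (f₁·(f₂∘σ_i))∘τ and (f₁·(f₂∘σ_j))∘τ' are both monotone nondecreasing, the functions (f₁·(f₂∘σ_i))∘τ and (f₁·(f₂∘σ_j))∘τ' are not equivalent. (That is, there exists an infinite (f₁,f₂)-wild set of permutations.) -/

import Mathlib

noncomputable section

/-- `f` is admissible: positive, monotone nondecreasing, and unbounded. -/
def Admissible (f : ℕ → ℝ) : Prop :=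
  (∀ n, 0 < f n) ∧ Monotone f ∧ ¬ BddAbove (Set.range f)

/-- Membership in the weighted space `ℓ²_f`: `∑ f n * x n ^ 2 < ∞`. -/
def MemW (f : ℕ → ℝ) (x : ℕ → ℝ) : Prop :=
  Summable fun n => f n * x n ^ 2

/-- The `ℓ²_f` norm of a sequence, `(∑ f n * x n ^ 2)^(1/2)`. -/
noncomputable def wNorm (f : ℕ → ℝ) (x : ℕ → ℝ) : ℝ :=
  Real.sqrt (∑' n, f n * x n ^ 2)

/-- Equivalence of positive weight functions: `(1/c) f₁ ≤ f₂ ≤ c f₁`. -/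
def FEquiv (f₁ f₂ : ℕ → ℝ) : Prop :=
  ∃ c : ℝ, 0 < c ∧ ∀ n, (1 / c) * f₁ n ≤ f₂ n ∧ f₂ n ≤ c * f₁ n

/-- The Hilbert space `ℓ²` of square-summable real sequences. -/
abbrev L2 := lp (fun _ : ℕ => ℝ) 2

/-!
Cut `ℕ` into blocks `[M k, M (k+1))` with `M (k+1) = 2 t_k`, where `t_k > M k` is so large that
`f₁ n * f₂ 0` and `f₁ 0 * f₂ n` exceed `k * q (M k)` for `n ≥ t_k`, `q = f₁ * f₂`. Label block `k`
by `(unpair k).1` and let `σ_l` reverse exactly the blocks whose label is not `l`. Reversal sends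
`[M k, t_k)` above `t_k`, so if `σ_i` reverses block `k` then `f₁ n * f₂ (σ_i n) > k * q (M k)`
for all `n ≥ M k`; if `σ_j` fixes it, `σ_j` maps `[0, M k]` into itself and
`f₁ n * f₂ (σ_j n) ≤ q (M k)` for `n ≤ M k`. By pigeonhole, the increasing rearrangements of the
two products at position `M k` differ by a factor `k`, and every label recurs at arbitrarily
large `k`.
-/

open Filter

lemma Admissible.tendsto_atTop {f : ℕ → ℝ} (hf : Admissible f) : Tendsto f atTop atTop :=
  tendsto_atTop_atTop_of_monotone' hf.2.1 hf.2.2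

lemma Admissible.eventually_lt_mul {a b : ℕ → ℝ} (ha : Admissible a) (hb : Admissible b)
    (u : ℝ) : ∀ᶠ n in atTop, u < a n * b 0 ∧ u < a 0 * b n :=
  ((ha.tendsto_atTop.atTop_mul_const (hb.1 0)).eventually_gt_atTop u).and
    ((hb.tendsto_atTop.const_mul_atTop (ha.1 0)).eventually_gt_atTop u)

section Rearrangement

lemma exists_le_le_apply_of_injective {f : ℕ → ℕ} (hf : Function.Injective f) (p : ℕ) :
    ∃ m ≤ p, p ≤ f m := by
  by_contra! h
  have hcard := Finset.card_le_card_of_injOn f (s := Finset.Iic p) (t := Finset.Iio p)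
    (fun m hm => by simpa using h m (by simpa using hm)) hf.injOn
  simp at hcard

variable {α : Type*} [Preorder α] {g : ℕ → α} {τ : Equiv.Perm ℕ}

lemma lt_apply_of_monotone_comp (hg : Monotone fun n => g (τ n)) {p : ℕ} {u : α}
    (h : ∀ n, p ≤ n → u < g n) : u < g (τ p) := by
  obtain ⟨m, hmp, hpm⟩ := exists_le_le_apply_of_injective τ.injective p
  exact (h _ hpm).trans_le (hg hmp)

lemma apply_le_of_monotone_comp (hg : Monotone fun n => g (τ n)) {p : ℕ} {w : α}
    (h : ∀ n ≤ p, g n ≤ w) : g (τ p) ≤ w := by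
  obtain ⟨m, hmp, hpm⟩ := exists_le_le_apply_of_injective τ.symm.injective p
  calc g (τ p) ≤ g (τ (τ.symm m)) := hg hpm
    _ = g m := by rw [Equiv.apply_symm_apply]
    _ ≤ w := h m (by simpa using hmp)

end Rearrangement

lemma not_fequiv_of_monotone_comp {g g' : ℕ → ℝ} {τ τ' : Equiv.Perm ℕ}
    (hg : Monotone fun n => g (τ n)) (hg' : Monotone fun n => g' (τ' n))
    (h : ∀ c > 0, ∃ p w, (∀ n, p ≤ n → c * w < g n) ∧ ∀ n ≤ p, g' n ≤ w) :
    ¬ FEquiv (fun n => g (τ n)) (fun n => g' (τ' n)) := by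
  rintro ⟨c, hc, hequiv⟩
  obtain ⟨p, w, hlarge, hsmall⟩ := h c hc
  have hx := lt_apply_of_monotone_comp hg hlarge
  have hy := apply_le_of_monotone_comp hg' hsmall
  have hxy : g (τ p) ≤ c * g' (τ' p) := by
    have := (hequiv p).1
    rwa [one_div, inv_mul_le_iff₀ hc] at this
  nlinarith

section Blocks

variable {M : ℕ → ℕ}

def blockOf (M : ℕ → ℕ) (n : ℕ) : ℕ := sInf {k | n < M (k + 1)}

def blockFlip (M : ℕ → ℕ) (S : Set ℕ) [DecidablePred (· ∈ S)] (n : ℕ) : ℕ :=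
  if blockOf M n ∈ S then M (blockOf M n) + M (blockOf M n + 1) - 1 - n else n

lemma lt_apply_blockOf_succ (hM : StrictMono M) (n : ℕ) : n < M (blockOf M n + 1) :=
  Nat.sInf_mem (s := {k | n < M (k + 1)}) ⟨n, (Nat.lt_succ_self n).trans_le (hM.id_le (n + 1))⟩

lemma blockOf_eq (hM : StrictMono M) {k n : ℕ} (h₁ : M k ≤ n) (h₂ : n < M (k + 1)) :
    blockOf M n = k := by
  refine le_antisymm (Nat.sInf_le h₂) (not_lt.1 fun hlt => ?_)
  exact absurd ((lt_apply_blockOf_succ hM n).trans_le (hM.monotone hlt)) (not_lt.2 h₁)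

lemma blockOf_spec (hM : StrictMono M) (hM0 : M 0 = 0) (n : ℕ) :
    M (blockOf M n) ≤ n ∧ n < M (blockOf M n + 1) := by
  refine ⟨?_, lt_apply_blockOf_succ hM n⟩
  rcases h : blockOf M n with _ | k
  · simp [hM0]
  · simpa using Nat.notMem_of_lt_sInf (h ▸ Nat.lt_succ_self k : k < blockOf M n)

variable (hM : StrictMono M) (hM0 : M 0 = 0) (S : Set ℕ) [DecidablePred (· ∈ S)]
include hM hM0

lemma blockFlip_spec (n : ℕ) :
    M (blockOf M n) ≤ blockFlip M S n ∧ blockFlip M S n < M (blockOf M n + 1) := by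
  have := blockOf_spec hM hM0 n
  unfold blockFlip
  split_ifs <;> omega

lemma blockOf_blockFlip (n : ℕ) : blockOf M (blockFlip M S n) = blockOf M n :=
  blockOf_eq hM (blockFlip_spec hM hM0 S n).1 (blockFlip_spec hM hM0 S n).2

lemma blockFlip_involutive : Function.Involutive (blockFlip M S) := by
  intro n
  have := blockOf_spec hM hM0 n
  rw [blockFlip, blockOf_blockFlip hM hM0 S]
  unfold blockFlip
  split_ifs <;> omega

omit hM0 in
lemma blockFlip_of_mem {k n : ℕ} (hk : k ∈ S) (h₁ : M k ≤ n) (h₂ : n < M (k + 1)) :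
    blockFlip M S n = M k + M (k + 1) - 1 - n := by
  simp only [blockFlip, blockOf_eq hM h₁ h₂, if_pos hk]

lemma blockFlip_le_of_notMem {k n : ℕ} (hk : k ∉ S) (hn : n ≤ M k) :
    blockFlip M S n ≤ M k := by
  rcases hn.lt_or_eq with hlt | rfl
  · have hblock := blockOf_spec hM hM0 n
    have hlt' : blockOf M n < k := hM.lt_iff_lt.1 (hblock.1.trans_lt hlt)
    exact ((blockFlip_spec hM hM0 S n).2.trans_le (hM.monotone hlt')).le
  · simp [blockFlip, blockOf_eq hM le_rfl (hM (Nat.lt_succ_self k)), hk]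

end Blocks

lemma exists_blocks {p : ℕ → ℕ → ℕ → Prop} (h : ∀ k m, ∀ᶠ n in atTop, p k m n) :
    ∃ M : ℕ → ℕ, M 0 = 0 ∧
      ∀ k, ∃ t, M k < t ∧ M (k + 1) = 2 * t ∧ ∀ n, t ≤ n → p k (M k) n := by
  have h' k m : ∃ t, ∀ n, t ≤ n → m < n ∧ p k m n :=
    eventually_atTop.1 ((eventually_gt_atTop m).and (h k m))
  choose T hT using h'
  refine ⟨fun k => Nat.rec 0 (fun k m => 2 * T k m) k, rfl, fun k => ?_⟩
  exact ⟨_, (hT _ _ _ le_rfl).1, rfl, fun n hn => (hT _ _ n hn).2⟩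

section Weights

variable {a b : ℕ → ℝ} (ha : Monotone a) (hb : Monotone b) (ha₀ : 0 ≤ a) (hb₀ : 0 ≤ b)
include ha hb ha₀ hb₀

lemma lt_mul_apply_of_le_apply {σ : ℕ → ℕ} {m t : ℕ} {u : ℝ}
    (hσ : ∀ n, m ≤ n → n < t → t ≤ σ n) (ht : ∀ n, t ≤ n → u < a n * b 0 ∧ u < a 0 * b n)
    (n : ℕ) (hn : m ≤ n) : u < a n * b (σ n) := by
  rcases lt_or_ge n t with hnt | htn
  · calc u < a 0 * b (σ n) := (ht _ (hσ n hn hnt)).2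
      _ ≤ a n * b (σ n) := mul_le_mul_of_nonneg_right (ha (Nat.zero_le n)) (hb₀ _)
  · calc u < a n * b 0 := (ht n htn).1
      _ ≤ a n * b (σ n) := mul_le_mul_of_nonneg_left (hb (Nat.zero_le _)) (ha₀ n)

lemma mul_apply_le_of_apply_le {σ : ℕ → ℕ} {m : ℕ} (hσ : ∀ n ≤ m, σ n ≤ m) (n : ℕ)
    (hn : n ≤ m) : a n * b (σ n) ≤ a m * b m :=
  mul_le_mul (ha hn) (hb (hσ n hn)) (hb₀ _) ((ha₀ n).trans (ha hn))

end Weights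

lemma Admissible.exists_perms_separating_blocks {ι : Type*} {a b : ℕ → ℝ} (ha : Admissible a)
    (hb : Admissible b) (label : ℕ → ι) :
    ∃ (M : ℕ → ℕ) (σ : ι → Equiv.Perm ℕ),
      (∀ l k, label k ≠ l → ∀ n, M k ≤ n → k * (a (M k) * b (M k)) < a n * b (σ l n)) ∧
      ∀ k n, n ≤ M k → a n * b (σ (label k) n) ≤ a (M k) * b (M k) := by
  classical
  obtain ⟨M, hM0, hblocks⟩ := exists_blocks fun k m =>
    ha.eventually_lt_mul hb ((k : ℝ) * (a m * b m))
  choose t hMt hMt₂ ht using hblocks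
  have hM : StrictMono M :=
    strictMono_nat_of_lt_succ fun k => by have := hMt k; have := hMt₂ k; omega
  let S (l : ι) : Set ℕ := {k | label k ≠ l}
  let σ (l : ι) : Equiv.Perm ℕ := (blockFlip_involutive hM hM0 (S l)).toPerm
  have hflip {l k} (hk : label k ≠ l) (n : ℕ) (hn : M k ≤ n) (hnt : n < t k) : t k ≤ σ l n := by
    have hMk := hMt₂ k
    have := blockFlip_of_mem hM (S l) hk hn (hnt.trans_le (by omega))
    simp only [σ, Function.Involutive.coe_toPerm, this]
    omega
  have hfix (k n : ℕ) (hn : n ≤ M k) : σ (label k) n ≤ M k :=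
    blockFlip_le_of_notMem hM hM0 (S (label k)) (by simp [S]) hn
  have ha₀ : 0 ≤ a := fun n => (ha.1 n).le
  have hb₀ : 0 ≤ b := fun n => (hb.1 n).le
  exact ⟨M, σ, fun l k hk => lt_mul_apply_of_le_apply ha.2.1 hb.2.1 ha₀ hb₀ (hflip hk) (ht k),
    fun k => mul_apply_le_of_apply_le ha.2.1 hb.2.1 ha₀ hb₀ (hfix k)⟩

/-- For admissible `f₁, f₂` there exists an infinite `(f₁,f₂)`-wild set of
permutations: an injective sequence `σ_i` of permutations such that for
`i ≠ j` the monotone rearrangements of `f₁·(f₂∘σ_i)` and `f₁·(f₂∘σ_j)` are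
never equivalent. -/
theorem exists_infinite_wild_set (f₁ f₂ : ℕ → ℝ)
    (h₁ : Admissible f₁) (h₂ : Admissible f₂) :
    ∃ σ : ℕ → Equiv.Perm ℕ, Function.Injective σ ∧
      ∀ i j, i ≠ j → ∀ τ τ' : Equiv.Perm ℕ,
        Monotone (fun n => f₁ (τ n) * f₂ (σ i (τ n))) →
        Monotone (fun n => f₁ (τ' n) * f₂ (σ j (τ' n))) →
        ¬ FEquiv (fun n => f₁ (τ n) * f₂ (σ i (τ n)))
            (fun n => f₁ (τ' n) * f₂ (σ j (τ' n))) := by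
  obtain ⟨M, σ, hlarge, hsmall⟩ :=
    h₁.exists_perms_separating_blocks h₂ fun k => (Nat.unpair k).1
  have hlabel (j K : ℕ) : (Nat.unpair (Nat.pair j K)).1 = j := by simp
  refine ⟨σ, fun i j hσ => by_contra fun hne => ?_, fun i j hij τ τ' hτ hτ' => ?_⟩
  · set k := Nat.pair j 1
    have hx := hlarge i k (by rw [hlabel]; exact Ne.symm hne) (M k) le_rfl
    have hy := hsmall k (M k) le_rfl
    have hk : (1 : ℝ) ≤ k := by exact_mod_cast Nat.right_le_pair j 1
    rw [hlabel, ← hσ] at hy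
    nlinarith [mul_pos (h₁.1 (M k)) (h₂.1 (M k))]
  refine not_fequiv_of_monotone_comp (g := fun n => f₁ n * f₂ (σ i n))
    (g' := fun n => f₁ n * f₂ (σ j n)) hτ hτ' fun c hc => ?_
  set k := Nat.pair j ⌈c⌉₊
  have hck : c ≤ k := (Nat.le_ceil c).trans (by exact_mod_cast Nat.right_le_pair _ _)
  refine ⟨M k, f₁ (M k) * f₂ (M k), fun n hn => ?_, by simpa [k] using hsmall k⟩
  calc c * (f₁ (M k) * f₂ (M k)) ≤ k * (f₁ (M k) * f₂ (M k)) :=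
        mul_le_mul_of_nonneg_right hck (mul_pos (h₁.1 _) (h₂.1 _)).le
    _ < f₁ n * f₂ (σ i n) := hlarge i k (by rw [hlabel]; exact Ne.symm hij) n hn
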